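/- Soundness of recycling (half of the main theorem): for every i ≥ 0, the rewrite system R^i_P is sound; that is, for any literal g and any rewrite sequence g →_{R^i} T(C₁) ∨ … ∨ T(Cₙ), and for each C_j (j ∈ [1..n]), there exists a partial stable model M of P such that g ∈ C_j ⊆ M. -/

import Mathlib

/-- A rule `a ← b₁,…,b_m, not c₁,…,not c_n` of a normal logic program. -/
structure PRule (α : Type) where
  head : α
  pos : List α
  neg : List α

/-- `Derives P S a` formalizes `P ∪ S ⊢ a`: standard propositional derivation of the
atom `a` from the program `P` together with the set `S` of default negations
(each default negation `not c` treated as a named atom, identified with `c ∈ S`). -/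
inductive Derives {α : Type} (P : List (PRule α)) (S : Set α) : α → Prop
  | step (r : PRule α) (hr : r ∈ P)
      (hpos : ∀ b ∈ r.pos, Derives P S b)
      (hneg : ∀ c ∈ r.neg, c ∈ S) :
      Derives P S r.head

/-- `F_P(S) = { not a | P ∪ S ⊬ a }`, a set of default negations identified with atoms. -/
def FPop {α : Type} (P : List (PRule α)) (S : Set α) : Set α :=
  {a | ¬ Derives P S a}

/-- Literals: an atom or its negation. -/
inductive Lit (α : Type) where
  | pos : α → Lit α
  | neg : α → Lit α
  deriving DecidableEq

namespace Lit
def atom {α : Type} : Lit α → α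
  | .pos a => a
  | .neg a => a
def compl {α : Type} : Lit α → Lit α
  | .pos a => .neg a
  | .neg a => .pos a
def isPos {α : Type} : Lit α → Prop
  | .pos _ => True
  | .neg _ => False
def isNeg {α : Type} : Lit α → Prop
  | .pos _ => False
  | .neg _ => True
end Lit

/-- The partial stable model determined by a set `S` of default negations:
`¬ξ ∈ M` iff `not ξ ∈ S`, and `ξ ∈ M` iff `P ∪ S ⊢ ξ`. -/
def modelOf {α : Type} (P : List (PRule α)) (S : Set α) : Set (Lit α) :=
  {l | ∃ a, (l = Lit.neg a ∧ a ∈ S) ∨ (l = Lit.pos a ∧ Derives P S a)}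

/-- `M` is a partial stable model of `P`: it is determined by some `S` with
`F_P²(S) = S` and `S ⊆ F_P(S)`. -/
def IsPSM {α : Type} (P : List (PRule α)) (M : Set (Lit α)) : Prop :=
  ∃ S : Set α, FPop P (FPop P S) = S ∧ S ⊆ FPop P S ∧ M = modelOf P S

/-- A set of literals is consistent if it contains no complementary pair. -/
def ConsistentSet {α : Type} (C : Set (Lit α)) : Prop :=
  ∀ a : α, ¬ (Lit.pos a ∈ C ∧ Lit.neg a ∈ C)

/-- Goal formulas: `F`, `T(C)` (with context `C`), literals annotated with the list of
their strict ancestors on the rewrite chain leading to them, conjunction and disjunction. -/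
inductive GGoal (α : Type) where
  | F : GGoal α
  | T : Set (Lit α) → GGoal α
  | lit : Lit α → List (Lit α) → GGoal α
  | and : GGoal α → GGoal α → GGoal α
  | or : GGoal α → GGoal α → GGoal α

/-- A positive loop: equal atom endpoints and all literals on the chain atoms. -/
def PosLoop {α : Type} (seg : List (Lit α)) : Prop :=
  2 ≤ seg.length ∧ seg.head? = seg.getLast? ∧ ∀ x ∈ seg, x.isPos

/-- A negative loop: equal negative-literal endpoints and all literals negative. -/
def NegLoop {α : Type} (seg : List (Lit α)) : Prop :=
  2 ≤ seg.length ∧ seg.head? = seg.getLast? ∧ ∀ x ∈ seg, x.isNeg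

/-- An odd loop: complementary endpoint literals. -/
def OddLoop {α : Type} (seg : List (Lit α)) : Prop :=
  2 ≤ seg.length ∧ seg.getLast?.map Lit.compl = seg.head?

/-- An even loop: equal endpoints, neither a positive nor a negative loop. -/
def EvenLoop {α : Type} (seg : List (Lit α)) : Prop :=
  2 ≤ seg.length ∧ seg.head? = seg.getLast? ∧ ¬ PosLoop seg ∧ ¬ NegLoop seg

/-- The chain `c` ends with a failing loop: some suffix `gᵢ ≺⁺ lₙ` is a positive or odd loop. -/
def FailLoopChain {α : Type} (c : List (Lit α)) : Prop :=
  ∃ seg, seg <:+ c ∧ (PosLoop seg ∨ OddLoop seg)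

/-- The chain `c` ends with a succeeding loop: some suffix is a negative or even loop. -/
def SuccLoopChain {α : Type} (c : List (Lit α)) : Prop :=
  ∃ seg, seg <:+ c ∧ (NegLoop seg ∨ EvenLoop seg)

/-- The last literal of the chain `c` is a loop literal. -/
def LoopChain {α : Type} (c : List (Lit α)) : Prop := FailLoopChain c ∨ SuccLoopChain c

/-- The literals of the body of a rule (default negations as negative literals). -/
def bodyLits {α : Type} (r : PRule α) : List (Lit α) :=
  r.pos.map Lit.pos ++ r.neg.map Lit.neg

/-- The rules of `P` with head `a` (giving the completed definition of `a`). -/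
def rulesFor {α : Type} [DecidableEq α] (P : List (PRule α)) (a : α) : List (PRule α) :=
  P.filter (fun r => r.head = a)

/-- Disjunction of a list of goals (`F` if the list is empty). -/
def disjList {α : Type} : List (GGoal α) → GGoal α
  | [] => GGoal.F
  | [g] => g
  | g :: gs => GGoal.or g (disjList gs)

/-- Conjunction of a list of goals; an empty conjunction (empty body, or `¬F`)
is `T(C)` where `C` is the set of literals on the rewrite chain `anc`. -/
def conjList {α : Type} (anc : List (Lit α)) : List (GGoal α) → GGoal α
  | [] => GGoal.T {x | x ∈ anc}
  | [g] => g
  | g :: gs => GGoal.and g (conjList anc gs)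

/-- Program rule for a positive literal: `φ` rewrites to `B₁ ∨ … ∨ Bₙ`, where the `Bᵢ`
are the bodies of the rules with head `φ`; each new literal records the chain `anc`. -/
def posExp {α : Type} [DecidableEq α] (P : List (PRule α)) (anc : List (Lit α)) (a : α) : GGoal α :=
  disjList ((rulesFor P a).map
    (fun r => conjList anc ((bodyLits r).map (fun l => GGoal.lit l anc))))

/-- Program rule for a negative literal: `¬φ` rewrites to `¬B₁ ∧ … ∧ ¬Bₙ`,
where `¬Bᵢ` is the disjunction of the complements of the literals of `Bᵢ`. -/
def negExp {α : Type} [DecidableEq α] (P : List (PRule α)) (anc : List (Lit α)) (a : α) : GGoal α :=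
  conjList anc ((rulesFor P a).map
    (fun r => disjList ((bodyLits r).map (fun l => GGoal.lit l.compl anc))))

/-- One rewrite step of the goal rewrite system `⟨Q_L, R_P, →⟩` for `P`:
program rules (at non-loop literals), simplification rules SR1–SR5',
loop rules LR1 and LR2, applied anywhere inside a goal. -/
inductive GStep {α : Type} [DecidableEq α] (P : List (PRule α)) : GGoal α → GGoal α → Prop
  | litPos (a : α) (anc : List (Lit α)) (h : ¬ LoopChain (anc ++ [Lit.pos a])) :
      GStep P (.lit (.pos a) anc) (posExp P (anc ++ [Lit.pos a]) a)
  | litNeg (a : α) (anc : List (Lit α)) (h : ¬ LoopChain (anc ++ [Lit.neg a])) :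
      GStep P (.lit (.neg a) anc) (negExp P (anc ++ [Lit.neg a]) a)
  | lr1 (l : Lit α) (anc : List (Lit α)) (h : FailLoopChain (anc ++ [l])) :
      GStep P (.lit l anc) .F
  | lr2 (l : Lit α) (anc : List (Lit α)) (h : SuccLoopChain (anc ++ [l])) :
      GStep P (.lit l anc) (.T {x | x ∈ anc ++ [l]})
  | sr1 (g : GGoal α) : GStep P (.or .F g) g
  | sr1' (g : GGoal α) : GStep P (.or g .F) g
  | sr2 (g : GGoal α) : GStep P (.and .F g) .F
  | sr2' (g : GGoal α) : GStep P (.and g .F) .F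
  | sr3 (C₁ C₂ : Set (Lit α)) (h : ConsistentSet (C₁ ∪ C₂)) :
      GStep P (.and (.T C₁) (.T C₂)) (.T (C₁ ∪ C₂))
  | sr4 (C₁ C₂ : Set (Lit α)) (h : ¬ ConsistentSet (C₁ ∪ C₂)) :
      GStep P (.and (.T C₁) (.T C₂)) .F
  | sr5 (g₁ g₂ g₃ : GGoal α) :
      GStep P (.and g₁ (.or g₂ g₃)) (.or (.and g₁ g₂) (.and g₁ g₃))
  | sr5' (g₁ g₂ g₃ : GGoal α) :
      GStep P (.and (.or g₁ g₂) g₃) (.or (.and g₁ g₃) (.and g₂ g₃))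
  | andL (g g' h : GGoal α) : GStep P g g' → GStep P (.and g h) (.and g' h)
  | andR (g h h' : GGoal α) : GStep P h h' → GStep P (.and g h) (.and g h')
  | orL (g g' h : GGoal α) : GStep P g g' → GStep P (.or g h) (.or g' h)
  | orR (g h h' : GGoal α) : GStep P h h' → GStep P (.or g h) (.or g h')

/-- Rewrite sequences: the reflexive-transitive closure of single rewrite steps. -/
def GSteps {α : Type} [DecidableEq α] (P : List (PRule α)) : GGoal α → GGoal α → Prop :=
  Relation.ReflTransGen (GStep P)

/-- The goal `T(C₁) ∨ … ∨ T(Cₘ)`. -/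
def disjTT {α : Type} (Cs : List (Set (Lit α))) : GGoal α :=
  disjList (Cs.map GGoal.T)

/-- The initial goal for a literal `g` (empty rewrite chain so far). -/
def initGoal {α : Type} (g : Lit α) : GGoal α := GGoal.lit g []

/-- A computed rule for a literal: either `p → F`, or `p → T(C₁) ∨ … ∨ T(Cₙ)`. -/
inductive CRule (α : Type) where
  | fail : CRule α
  | succ : List (Set (Lit α)) → CRule α

/-- The right-hand side of the recycling rule RC at a literal with rewrite chain `chain`
(whose set of literals is `G`), for a computed rule with contexts `Ds`:
`T(G ∪ D'₁) ∨ … ∨ T(G ∪ D'_{k'})` where the `D'ᵢ` are those `D ∈ Ds` with `D ∪ G` consistent. -/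
noncomputable def recycleRHS {α : Type} (chain : List (Lit α)) (Ds : List (Set (Lit α))) : GGoal α :=
  disjTT ((Ds.filter (fun D =>
      @decide (ConsistentSet ({x | x ∈ chain} ∪ D)) (Classical.propDecidable _))).map
    (fun D => {x | x ∈ chain} ∪ D))

/-- One rewrite step of a goal rewrite system with computed rules `Δ`: literals with a
computed rule use it (via the recycling rule RC), the others use their program rule;
simplification and loop rules are unchanged. -/
inductive GStepC {α : Type} [DecidableEq α] (P : List (PRule α))
    (Δ : Lit α → Option (CRule α)) : GGoal α → GGoal α → Prop
  | litPos (a : α) (anc : List (Lit α)) (hΔ : Δ (Lit.pos a) = none)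
      (h : ¬ LoopChain (anc ++ [Lit.pos a])) :
      GStepC P Δ (.lit (.pos a) anc) (posExp P (anc ++ [Lit.pos a]) a)
  | litNeg (a : α) (anc : List (Lit α)) (hΔ : Δ (Lit.neg a) = none)
      (h : ¬ LoopChain (anc ++ [Lit.neg a])) :
      GStepC P Δ (.lit (.neg a) anc) (negExp P (anc ++ [Lit.neg a]) a)
  | compFail (l : Lit α) (anc : List (Lit α)) (hΔ : Δ l = some CRule.fail)
      (h : ¬ LoopChain (anc ++ [l])) :
      GStepC P Δ (.lit l anc) .F
  | recycle (l : Lit α) (anc : List (Lit α)) (Ds : List (Set (Lit α)))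
      (hΔ : Δ l = some (CRule.succ Ds)) (h : ¬ LoopChain (anc ++ [l])) :
      GStepC P Δ (.lit l anc) (recycleRHS (anc ++ [l]) Ds)
  | lr1 (l : Lit α) (anc : List (Lit α)) (h : FailLoopChain (anc ++ [l])) :
      GStepC P Δ (.lit l anc) .F
  | lr2 (l : Lit α) (anc : List (Lit α)) (h : SuccLoopChain (anc ++ [l])) :
      GStepC P Δ (.lit l anc) (.T {x | x ∈ anc ++ [l]})
  | sr1 (g : GGoal α) : GStepC P Δ (.or .F g) g
  | sr1' (g : GGoal α) : GStepC P Δ (.or g .F) g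
  | sr2 (g : GGoal α) : GStepC P Δ (.and .F g) .F
  | sr2' (g : GGoal α) : GStepC P Δ (.and g .F) .F
  | sr3 (C₁ C₂ : Set (Lit α)) (h : ConsistentSet (C₁ ∪ C₂)) :
      GStepC P Δ (.and (.T C₁) (.T C₂)) (.T (C₁ ∪ C₂))
  | sr4 (C₁ C₂ : Set (Lit α)) (h : ¬ ConsistentSet (C₁ ∪ C₂)) :
      GStepC P Δ (.and (.T C₁) (.T C₂)) .F
  | sr5 (g₁ g₂ g₃ : GGoal α) :
      GStepC P Δ (.and g₁ (.or g₂ g₃)) (.or (.and g₁ g₂) (.and g₁ g₃))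
  | sr5' (g₁ g₂ g₃ : GGoal α) :
      GStepC P Δ (.and (.or g₁ g₂) g₃) (.or (.and g₁ g₃) (.and g₂ g₃))
  | andL (g g' h : GGoal α) : GStepC P Δ g g' → GStepC P Δ (.and g h) (.and g' h)
  | andR (g h h' : GGoal α) : GStepC P Δ h h' → GStepC P Δ (.and g h) (.and g h')
  | orL (g g' h : GGoal α) : GStepC P Δ g g' → GStepC P Δ (.or g h) (.or g' h)
  | orR (g h h' : GGoal α) : GStepC P Δ h h' → GStepC P Δ (.or g h) (.or g h')

/-- Rewrite sequences in a system with computed rules. -/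
def GStepsC {α : Type} [DecidableEq α] (P : List (PRule α))
    (Δ : Lit α → Option (CRule α)) : GGoal α → GGoal α → Prop :=
  Relation.ReflTransGen (GStepC P Δ)

/-- `cr` is the computed rule for the literal `l` generated on the system `(P, Δ)`:
`l → F` if `l` rewrites to (the normal form) `F`, and `l → T(C₁) ∨ … ∨ T(Cₙ)` if `l`
rewrites to (the normal form) `T(C₁) ∨ … ∨ T(Cₙ)`. -/
def IsComputedRule {α : Type} [DecidableEq α] (P : List (PRule α))
    (Δ : Lit α → Option (CRule α)) (l : Lit α) : CRule α → Prop
  | .fail => GStepsC P Δ (initGoal l) GGoal.F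
  | .succ Cs => Cs ≠ [] ∧ GStepsC P Δ (initGoal l) (disjTT Cs)

/-- The systems `R⁰_P, R¹_P, R²_P, …`: `R⁰_P` has no computed rules, and `R^{i+1}_P` is
obtained from `R^i_P` by replacing the rewrite rules of some literals by their computed
rules generated on `R^i_P` (all other literals keep their `R^i_P` rules). -/
inductive ValidSystem {α : Type} [DecidableEq α] (P : List (PRule α)) :
    (Lit α → Option (CRule α)) → Prop
  | base : ValidSystem P (fun _ => none)
  | step (Δ Δ' : Lit α → Option (CRule α)) :
      ValidSystem P Δ →
      (∀ l : Lit α, Δ' l = Δ l ∨ ∃ cr, Δ' l = some cr ∧ IsComputedRule P Δ l cr) →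
      ValidSystem P Δ'


/-!
Read a goal as the set of answers it can still produce, an answer of a literal being a
justification tree: the literal is expanded by its program rule, closed by a succeeding loop,
or closed by recycling a context already known to be justified. Rewriting only removes
answers, so every context `C` of the final `T(C₁) ∨ … ∨ T(Cₙ)` is an answer of the initial
literal, and the loop checks keep every context consistent.

Reading off the tree, each negative literal of `C` blocks every rule of its atom by a
complemented body literal in `C`, and each positive literal is derivable from the default
negations in `C`: a positive leaf closed by a loop is closed by an even loop, so its earlier
occurrence lies above a negative literal and its derivation does not pass through the leaf.
Such a consistent, justified `C` lies in a partial stable model. Computed rules are handled by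
induction on `i`, their contexts being answers of this kind in `R^i_P`.
-/

section Semantics
variable {α : Type} {P : List (PRule α)}

def negAtoms (C : Set (Lit α)) : Set α := {a | Lit.neg a ∈ C}

def Entailed (P : List (PRule α)) (S : Set α) : Lit α → Prop
  | .pos a => Derives P S a
  | .neg a => a ∈ S

def Justified (P : List (PRule α)) (C : Set (Lit α)) : Lit α → Prop
  | .pos a => Derives P (negAtoms C) a
  | .neg a => ∀ r ∈ P, r.head = a → ∃ l ∈ bodyLits r, l.compl ∈ C

def JustifiedSet (P : List (PRule α)) (C : Set (Lit α)) : Prop := ∀ l ∈ C, Justified P C l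

theorem Derives.mono {S S' : Set α} (hS : S ⊆ S') {a : α} (h : Derives P S a) :
    Derives P S' a := by
  induction h with
  | step r hr _ hneg ih => exact .step r hr ih fun c hc => hS (hneg c hc)

theorem derives_of_entailed_body {S : Set α} {r : PRule α} (hr : r ∈ P)
    (hbody : ∀ l ∈ bodyLits r, Entailed P S l) : Derives P S r.head :=
  .step r hr (fun b hb => hbody (.pos b) (by simp [bodyLits, hb]))
    (fun c hc => hbody (.neg c) (by simp [bodyLits, hc]))

theorem FPop_antitone (P : List (PRule α)) : Antitone (FPop P) :=
  fun _ _ hS _ ha hd => ha (hd.mono hS)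

theorem negAtoms_mono {C C' : Set (Lit α)} (h : C ⊆ C') : negAtoms C ⊆ negAtoms C' :=
  fun _ ha => h ha

theorem Justified.mono {C C' : Set (Lit α)} (h : C ⊆ C') {l : Lit α} (hl : Justified P C l) :
    Justified P C' l := by
  cases l with
  | pos a => exact Derives.mono (negAtoms_mono h) hl
  | neg a =>
    intro r hr hhead
    obtain ⟨l, hl, hc⟩ := hl r hr hhead
    exact ⟨l, hl, h hc⟩

theorem Justified.entailed {C : Set (Lit α)} {l : Lit α} (hmem : l ∈ C) (hl : Justified P C l) :
    Entailed P (negAtoms C) l := by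
  cases l with
  | pos a => exact hl
  | neg a => exact hmem

theorem negAtoms_subset_FPop {C : Set (Lit α)} (hC : JustifiedSet P C) {X : Set α}
    (hX : ∀ a, Lit.pos a ∈ C → a ∉ X) : negAtoms C ⊆ FPop P X := by
  intro a ha hder
  induction hder with
  | step r hr _ hneg ih =>
    obtain ⟨l, hl, hcompl⟩ := hC _ ha r hr rfl
    cases l with
    | pos b => exact ih b (by simpa [bodyLits] using hl) hcompl
    | neg c => exact hX c hcompl (hneg c (by simpa [bodyLits] using hl))

theorem not_mem_FPop {C : Set (Lit α)} (hC : JustifiedSet P C) {X : Set α}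
    (hX : negAtoms C ⊆ X) {a : α} (ha : Lit.pos a ∈ C) : a ∉ FPop P X :=
  fun hF => hF (Derives.mono hX (hC _ ha))

/-- The default negations are the least fixpoint of `X ↦ negAtoms C ∪ F_P²(X)`; the
justification of `C` keeps the positive atoms of `C` out of it, and makes it a fixpoint of
`F_P²` lying below its image under `F_P`. -/
theorem exists_isPSM_superset {C : Set (Lit α)} (hcons : ConsistentSet C)
    (hC : JustifiedSet P C) : ∃ M, IsPSM P M ∧ C ⊆ M := by
  set N := negAtoms C
  set A : Set α := {a | Lit.pos a ∈ C}
  have hN : ∀ X, Disjoint A X → N ⊆ FPop P X :=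
    fun X hX => negAtoms_subset_FPop hC fun a ha => Set.disjoint_left.mp hX ha
  have hA : ∀ X, N ⊆ X → Disjoint A (FPop P X) :=
    fun X hX => Set.disjoint_left.mpr fun _ ha => not_mem_FPop hC hX ha
  let G : Set α →o Set α :=
    ⟨fun X => N ∪ FPop P (FPop P X), fun _ _ h =>
      Set.union_subset_union_right _ (FPop_antitone P (FPop_antitone P h))⟩
  set L := OrderHom.lfp G
  have hGL : N ∪ FPop P (FPop P L) = L := G.map_lfp
  have hLA : Disjoint A L := by
    have hle : L ⊆ Aᶜ := G.lfp_le <| Set.union_subset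
      (fun a ha hpos => hcons a ⟨hpos, ha⟩)
      (Set.disjoint_right.mp (hA _ (hN _ disjoint_compl_right)))
    exact Set.disjoint_left.mpr fun _ ha hL => hle hL ha
  have hNL : N ⊆ L := hGL ▸ Set.subset_union_left
  have hfix : FPop P (FPop P L) = L := by
    rw [← Set.union_eq_right.mpr (hN _ (hA L hNL)), hGL]
  have hLF : L ⊆ FPop P L := by
    refine G.lfp_le (Set.union_subset (hN L hLA) ?_)
    rw [hfix]
  refine ⟨modelOf P L, ⟨L, hfix, hLF, rfl⟩, ?_⟩
  rintro (a | a) ha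
  · exact ⟨a, .inr ⟨rfl, Derives.mono hNL (hC _ ha)⟩⟩
  · exact ⟨a, .inl ⟨rfl, hNL ha⟩⟩

end Semantics

section Chains
variable {α : Type}

@[simp] theorem Lit.compl_compl (l : Lit α) : l.compl.compl = l := by cases l <;> rfl

def NoFailingLoop (c : List (Lit α)) : Prop := ∀ d, d <+: c → ¬ FailLoopChain d

theorem noFailingLoop_nil : NoFailingLoop ([] : List (Lit α)) := by
  intro d hd
  obtain rfl := List.prefix_nil.mp hd
  rintro ⟨seg, hseg, ⟨hlen, -⟩ | ⟨hlen, -⟩⟩ <;> simp [List.suffix_nil.mp hseg] at hlen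

theorem NoFailingLoop.concat {c : List (Lit α)} {l : Lit α} (hc : NoFailingLoop c)
    (hl : ¬ LoopChain (c ++ [l])) : NoFailingLoop (c ++ [l]) := by
  intro d hd
  rcases List.prefix_concat_iff.mp hd with rfl | hd
  · exact fun h => hl (.inl h)
  · exact hc d hd

theorem failLoopChain_of_compl_mem {s t : List (Lit α)} {x : Lit α} (hx : x.compl ∈ t) :
    ∃ d, d <+: s ++ x :: t ∧ FailLoopChain d := by
  obtain ⟨u, v, rfl⟩ := List.append_of_mem hx
  refine ⟨s ++ x :: (u ++ [x.compl]), ⟨v, by simp⟩, x :: (u ++ [x.compl]), ⟨s, rfl⟩,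
    .inr ⟨by simp, ?_⟩⟩
  rw [← List.cons_append, List.getLast?_concat]
  simp

theorem NoFailingLoop.consistent {c : List (Lit α)} (hc : NoFailingLoop c) :
    ConsistentSet {x | x ∈ c} := by
  rintro a ⟨hpos, hneg⟩
  obtain ⟨s, t, rfl⟩ := List.append_of_mem (show Lit.pos a ∈ c from hpos)
  have hfail : ∃ d, d <+: s ++ Lit.pos a :: t ∧ FailLoopChain d := by
    rcases List.mem_append.mp (show Lit.neg a ∈ s ++ Lit.pos a :: t from hneg) with hs | ht
    · obtain ⟨u, v, rfl⟩ := List.append_of_mem hs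
      simpa using failLoopChain_of_compl_mem (s := u) (x := Lit.neg a)
        (t := v ++ Lit.pos a :: t) (by simp [Lit.compl])
    · exact failLoopChain_of_compl_mem (by simpa [Lit.compl] using ht)
  obtain ⟨d, hd, hd_fail⟩ := hfail
  exact hc d hd hd_fail

/-- A succeeding loop through a positive literal is even, so it passes a negative literal. -/
theorem exists_suffix_of_succLoopChain {anc : List (Lit α)} {l : Lit α}
    (h : SuccLoopChain (anc ++ [l])) :
    ∃ mid, l :: mid <:+ anc ∧ (l.isPos → ∃ q, Lit.neg q ∈ mid) := by
  obtain ⟨seg, hsuf, hloop⟩ := h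
  have hshape : 2 ≤ seg.length ∧ seg.head? = seg.getLast? := by
    rcases hloop with ⟨h1, h2, -⟩ | ⟨h1, h2, -⟩ <;> exact ⟨h1, h2⟩
  rcases List.suffix_concat_iff.mp hsuf with rfl | ⟨t, rfl, ht⟩
  · simp at hshape
  obtain ⟨x, mid, rfl⟩ : ∃ x mid, t = x :: mid := by
    cases t with
    | nil => simp at hshape
    | cons x mid => exact ⟨x, mid, rfl⟩
  obtain rfl : l = x := by
    have h2 := hshape.2
    rw [List.getLast?_concat] at h2
    simpa using h2.symm
  refine ⟨mid, ht, fun hl => ?_⟩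
  rcases hloop with ⟨-, -, hneg⟩ | ⟨-, -, hnotpos, -⟩
  · exact absurd (hneg l (by simp)) (by cases l <;> simp_all [Lit.isPos, Lit.isNeg])
  · by_contra hno
    refine hnotpos ⟨hshape.1, hshape.2, fun y hy => ?_⟩
    rw [List.mem_append, List.mem_cons, List.mem_singleton] at hy
    rcases hy with (rfl | hy) | rfl
    · exact hl
    · cases y with
      | pos => trivial
      | neg q => exact absurd ⟨q, hy⟩ hno
    · exact hl

theorem mem_of_succLoopChain {anc : List (Lit α)} {l : Lit α}
    (h : SuccLoopChain (anc ++ [l])) : l ∈ anc := by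
  obtain ⟨mid, hsuf, -⟩ := exists_suffix_of_succLoopChain h
  exact hsuf.subset List.mem_cons_self

theorem consistent_of_succLoopChain {anc : List (Lit α)} {l : Lit α} (hanc : NoFailingLoop anc)
    (h : SuccLoopChain (anc ++ [l])) : ConsistentSet {x | x ∈ anc ++ [l]} := by
  have hl := mem_of_succLoopChain h
  have hchain : {x | x ∈ anc ++ [l]} = {x | x ∈ anc} := by
    ext x
    simp only [Set.mem_ofPred_eq, List.mem_append, List.mem_singleton]
    exact ⟨fun h => h.elim id (· ▸ hl), .inl⟩
  rw [hchain]
  exact hanc.consistent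

/-- Derivability of the chain literals that a loop leaf further down can close on. -/
def LoopSafe (P : List (PRule α)) (S : Set α) (ch : List (Lit α)) : Prop :=
  ∀ p q, [Lit.pos p, Lit.neg q].Sublist ch → Derives P S p

theorem LoopSafe.concat_pos {P : List (PRule α)} {S : Set α} {ch : List (Lit α)}
    (h : LoopSafe P S ch) (b : α) : LoopSafe P S (ch ++ [.pos b]) := by
  intro p q hsub
  obtain ⟨l₁, l₂, hl, hl₁, hl₂⟩ := List.sublist_append_iff.mp hsub
  rcases List.sublist_singleton.mp hl₂ with rfl | rfl
  · rw [List.append_nil] at hl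
    exact h p q (hl ▸ hl₁)
  · cases l₁ with
    | nil => simp at hl
    | cons x l₁ => cases l₁ <;> simp at hl

theorem LoopSafe.derives_of_succLoopChain {P : List (PRule α)} {S : Set α}
    {anc : List (Lit α)} {b : α} (h : LoopSafe P S anc)
    (hloop : SuccLoopChain (anc ++ [.pos b])) : Derives P S b := by
  obtain ⟨mid, hsuf, hneg⟩ := exists_suffix_of_succLoopChain hloop
  obtain ⟨q, hq⟩ := hneg trivial
  exact h b q ((List.cons_sublist_cons.mpr (List.singleton_sublist.mpr hq)).trans hsuf.sublist)

end Chains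

namespace GGoal
variable {α : Type}

def Forall (p : Lit α → List (Lit α) → Prop) (q : Set (Lit α) → Prop) : GGoal α → Prop
  | .F => True
  | .T C => q C
  | .lit l anc => p l anc
  | .and g h => g.Forall p q ∧ h.Forall p q
  | .or g h => g.Forall p q ∧ h.Forall p q

def Sat (v : Lit α → Prop) : GGoal α → Prop
  | .F => False
  | .T _ => True
  | .lit l _ => v l
  | .and g h => g.Sat v ∧ h.Sat v
  | .or g h => g.Sat v ∨ h.Sat v

variable {p : Lit α → List (Lit α) → Prop} {q : Set (Lit α) → Prop} {v : Lit α → Prop}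

theorem forall_disjList_iff {L : List (GGoal α)} :
    (disjList L).Forall p q ↔ ∀ g ∈ L, g.Forall p q := by
  induction L with
  | nil => simp [disjList, Forall]
  | cons g gs ih =>
    cases gs with
    | nil => simp [disjList]
    | cons g' gs => simp [disjList, Forall, ih]

theorem forall_conjList {ch : List (Lit α)} {L : List (GGoal α)} (hq : q {x | x ∈ ch})
    (hL : ∀ g ∈ L, g.Forall p q) : (conjList ch L).Forall p q := by
  induction L with
  | nil => exact hq
  | cons g gs ih =>
    cases gs with
    | nil => exact hL g (by simp)
    | cons g' gs => exact ⟨hL g (by simp), ih fun g'' hg'' => hL g'' (by simp [hg''])⟩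

theorem forall_disjTT_iff {Cs : List (Set (Lit α))} :
    (disjTT Cs).Forall p q ↔ ∀ C ∈ Cs, q C := by
  simp [disjTT, forall_disjList_iff, Forall]

theorem exists_sat_of_sat_disjList {L : List (GGoal α)} (h : (disjList L).Sat v) :
    ∃ g ∈ L, g.Sat v := by
  induction L with
  | nil => exact h.elim
  | cons g gs ih =>
    cases gs with
    | nil => exact ⟨g, by simp, h⟩
    | cons g' gs =>
      rcases h with h | h
      · exact ⟨g, by simp, h⟩
      · obtain ⟨g'', hg'', hsat⟩ := ih h
        exact ⟨g'', List.mem_cons_of_mem _ hg'', hsat⟩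

theorem sat_of_sat_conjList {ch : List (Lit α)} {L : List (GGoal α)} (h : (conjList ch L).Sat v) :
    ∀ g ∈ L, g.Sat v := by
  induction L with
  | nil => simp
  | cons g gs ih =>
    cases gs with
    | nil => simpa [conjList] using h
    | cons g' gs =>
      rintro g'' (_ | ⟨_, hg''⟩)
      · exact h.1
      · exact ih h.2 g'' hg''

end GGoal

section Rewriting
variable {α : Type} [DecidableEq α] {P : List (PRule α)}

theorem GGoal.forall_posExp {p : Lit α → List (Lit α) → Prop} {q : Set (Lit α) → Prop}
    {ch : List (Lit α)} {a : α} (hp : ∀ l, p l ch) (hq : q {x | x ∈ ch}) :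
    (posExp P ch a).Forall p q := by
  simp only [posExp, forall_disjList_iff, List.mem_map]
  rintro _ ⟨r, -, rfl⟩
  refine forall_conjList hq ?_
  simp only [List.mem_map]
  rintro _ ⟨l, -, rfl⟩
  exact hp l

theorem GGoal.forall_negExp {p : Lit α → List (Lit α) → Prop} {q : Set (Lit α) → Prop}
    {ch : List (Lit α)} {a : α} (hp : ∀ l, p l ch) (hq : q {x | x ∈ ch}) :
    (negExp P ch a).Forall p q := by
  refine forall_conjList hq ?_
  simp only [List.mem_map]
  rintro _ ⟨r, -, rfl⟩
  simp only [forall_disjList_iff, List.mem_map]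
  rintro _ ⟨l, -, rfl⟩
  exact hp l.compl

theorem derives_of_sat_posExp {S : Set α} {ch : List (Lit α)} {a : α}
    (h : (posExp P ch a).Sat (Entailed P S)) : Derives P S a := by
  obtain ⟨_, hg, hsat⟩ := GGoal.exists_sat_of_sat_disjList h
  obtain ⟨r, hr, rfl⟩ := List.mem_map.mp hg
  obtain ⟨hrP, hhead⟩ := List.mem_filter.mp hr
  obtain rfl : r.head = a := of_decide_eq_true hhead
  refine derives_of_entailed_body hrP fun l hl => ?_
  exact GGoal.sat_of_sat_conjList hsat _ (List.mem_map_of_mem hl)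

/-- The answers a goal can still produce, read as justification trees. -/
inductive Answer (P : List (PRule α)) : GGoal α → Set (Lit α) → Prop
  | T (C : Set (Lit α)) : Answer P (.T C) C
  | orL {g h : GGoal α} {D : Set (Lit α)} : Answer P g D → Answer P (.or g h) D
  | orR {g h : GGoal α} {D : Set (Lit α)} : Answer P h D → Answer P (.or g h) D
  | and {g h : GGoal α} {D₁ D₂ : Set (Lit α)} :
      Answer P g D₁ → Answer P h D₂ → Answer P (.and g h) (D₁ ∪ D₂)
  | litPos (a : α) (anc : List (Lit α)) {D : Set (Lit α)} :
      Answer P (posExp P (anc ++ [.pos a]) a) D → Answer P (.lit (.pos a) anc) D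
  | litNeg (a : α) (anc : List (Lit α)) {D : Set (Lit α)} :
      Answer P (negExp P (anc ++ [.neg a]) a) D → Answer P (.lit (.neg a) anc) D
  | loop (l : Lit α) (anc : List (Lit α)) :
      SuccLoopChain (anc ++ [l]) → Answer P (.lit l anc) {x | x ∈ anc ++ [l]}
  | recycle (l : Lit α) (anc : List (Lit α)) {D : Set (Lit α)} :
      l ∈ D → JustifiedSet P D → Answer P (.lit l anc) ({x | x ∈ anc ++ [l]} ∪ D)

namespace Answer

theorem disjList_iff {L : List (GGoal α)} {D : Set (Lit α)} :
    Answer P (disjList L) D ↔ ∃ g ∈ L, Answer P g D := by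
  induction L with
  | nil =>
    constructor
    · rintro ⟨⟩
    · rintro ⟨_, hg, _⟩
      simp at hg
  | cons g gs ih =>
    cases gs with
    | nil => simp [disjList]
    | cons g' gs =>
      constructor
      · rintro (_ | h | h)
        · exact ⟨g, by simp, h⟩
        · obtain ⟨g'', hg'', h⟩ := ih.mp h
          exact ⟨g'', List.mem_cons_of_mem _ hg'', h⟩
      · rintro ⟨g'', (_ | ⟨_, hg''⟩), h⟩
        · exact .orL h
        · exact .orR (ih.mpr ⟨g'', hg'', h⟩)

theorem disjTT_iff {Cs : List (Set (Lit α))} {D : Set (Lit α)} :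
    Answer P (disjTT Cs) D ↔ D ∈ Cs := by
  rw [disjTT, disjList_iff]
  constructor
  · rintro ⟨_, hg, h⟩
    obtain ⟨C, hC, rfl⟩ := List.mem_map.mp hg
    cases h
    exact hC
  · exact fun hD => ⟨.T D, List.mem_map_of_mem hD, .T D⟩

theorem exists_subset_of_conjList {ch : List (Lit α)} {L : List (GGoal α)} {D : Set (Lit α)}
    (h : Answer P (conjList ch L) D) : ∀ g ∈ L, ∃ D' ⊆ D, Answer P g D' := by
  induction L generalizing D with
  | nil => simp
  | cons g gs ih =>
    cases gs with
    | nil => simpa [conjList] using ⟨D, subset_rfl, h⟩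
    | cons g' gs =>
      obtain _ | _ | _ | ⟨h₁, h₂⟩ := h
      rintro g'' (_ | ⟨_, hg''⟩)
      · exact ⟨_, Set.subset_union_left, h₁⟩
      · obtain ⟨D', hD', h'⟩ := ih h₂ g'' hg''
        exact ⟨D', hD'.trans Set.subset_union_right, h'⟩

theorem subset_of_forall {g : GGoal α} {D S : Set (Lit α)} (h : Answer P g D)
    (hS : g.Forall (fun l anc => S ⊆ {x | x ∈ anc ++ [l]}) (S ⊆ ·)) : S ⊆ D := by
  induction h with
  | T C => exact hS
  | orL _ ih => exact ih hS.1
  | orR _ ih => exact ih hS.2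
  | and _ _ ih₁ _ => exact (ih₁ hS.1).trans Set.subset_union_left
  | litPos a anc _ ih =>
    exact ih (GGoal.forall_posExp (fun _ => hS.trans fun _ hx => List.mem_append_left _ hx) hS)
  | litNeg a anc _ ih =>
    exact ih (GGoal.forall_negExp (fun _ => hS.trans fun _ hx => List.mem_append_left _ hx) hS)
  | loop l anc _ => exact hS
  | recycle l anc _ _ => exact hS.trans Set.subset_union_left

theorem chain_subset {l : Lit α} {anc : List (Lit α)} {D : Set (Lit α)}
    (h : Answer P (.lit l anc) D) : {x | x ∈ anc ++ [l]} ⊆ D :=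
  h.subset_of_forall subset_rfl

theorem mem_of_lit {l : Lit α} {anc : List (Lit α)} {D : Set (Lit α)}
    (h : Answer P (.lit l anc) D) : l ∈ D :=
  h.chain_subset (List.mem_append_right _ List.mem_cons_self)

theorem justified_neg_of_negExp {ch : List (Lit α)} {a : α} {D : Set (Lit α)}
    (h : Answer P (negExp P ch a) D) : Justified P D (.neg a) := by
  intro r hr hhead
  have hrules : r ∈ rulesFor P a := List.mem_filter.mpr ⟨hr, by simp [hhead]⟩
  obtain ⟨D', hD', h'⟩ := h.exists_subset_of_conjList _ (List.mem_map_of_mem hrules)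
  obtain ⟨_, hg, h''⟩ := disjList_iff.mp h'
  obtain ⟨l, hl, rfl⟩ := List.mem_map.mp hg
  exact ⟨l, hl, hD' h''.mem_of_lit⟩

end Answer

def SoundRules (P : List (PRule α)) (Δ : Lit α → Option (CRule α)) : Prop :=
  ∀ l Ds, Δ l = some (.succ Ds) → ∀ D ∈ Ds, l ∈ D ∧ JustifiedSet P D

theorem Answer.of_step {Δ : Lit α → Option (CRule α)} (hΔ : SoundRules P Δ)
    {g g' : GGoal α} (hs : GStepC P Δ g g') {D : Set (Lit α)} (h : Answer P g' D) :
    Answer P g D := by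
  induction hs generalizing D with
  | litPos a anc => exact .litPos a anc h
  | litNeg a anc => exact .litNeg a anc h
  | compFail | lr1 | sr2 | sr2' | sr4 => cases h
  | lr2 l anc hloop =>
    cases h
    exact .loop l anc hloop
  | recycle l anc Ds hl =>
    obtain ⟨_, hD, rfl⟩ := List.mem_map.mp (disjTT_iff.mp h)
    obtain ⟨hmem, hjust⟩ := hΔ l Ds hl _ (List.mem_of_mem_filter hD)
    exact .recycle l anc hmem hjust
  | sr1 => exact .orR h
  | sr1' => exact .orL h
  | sr3 C₁ C₂ =>
    cases h
    exact .and (.T C₁) (.T C₂)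
  | sr5 =>
    rcases h with _ | ⟨_ | _ | _ | ⟨h₁, h₂⟩⟩ | ⟨_ | _ | _ | ⟨h₁, h₂⟩⟩
    · exact .and h₁ (.orL h₂)
    · exact .and h₁ (.orR h₂)
  | sr5' =>
    rcases h with _ | ⟨_ | _ | _ | ⟨h₁, h₂⟩⟩ | ⟨_ | _ | _ | ⟨h₁, h₂⟩⟩
    · exact .and (.orL h₁) h₂
    · exact .and (.orR h₁) h₂
  | andL _ _ _ _ ih =>
    obtain _ | _ | _ | ⟨h₁, h₂⟩ := h
    exact .and (ih h₁) h₂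
  | andR _ _ _ _ ih =>
    obtain _ | _ | _ | ⟨h₁, h₂⟩ := h
    exact .and h₁ (ih h₂)
  | orL _ _ _ _ ih =>
    rcases h with _ | h | h
    · exact .orL (ih h)
    · exact .orR h
  | orR _ _ _ _ ih =>
    rcases h with _ | h | h
    · exact .orL h
    · exact .orR (ih h)

theorem Answer.of_steps {Δ : Lit α → Option (CRule α)} (hΔ : SoundRules P Δ)
    {g g' : GGoal α} (hs : GStepsC P Δ g g') {D : Set (Lit α)} (h : Answer P g' D) :
    Answer P g D := by
  induction hs with
  | refl => exact h
  | tail _ hstep ih => exact ih (h.of_step hΔ hstep)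

def WellFormed (g : GGoal α) : Prop := g.Forall (fun _ anc => NoFailingLoop anc) ConsistentSet

theorem WellFormed.of_step {Δ : Lit α → Option (CRule α)} {g g' : GGoal α}
    (hs : GStepC P Δ g g') (hg : WellFormed g) : WellFormed g' := by
  induction hs with
  | litPos a anc _ hloop =>
    have hch := NoFailingLoop.concat hg hloop
    exact GGoal.forall_posExp (fun _ => hch) hch.consistent
  | litNeg a anc _ hloop =>
    have hch := NoFailingLoop.concat hg hloop
    exact GGoal.forall_negExp (fun _ => hch) hch.consistent
  | compFail | lr1 | sr2 | sr2' | sr4 => trivial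
  | lr2 l anc hloop => exact consistent_of_succLoopChain hg hloop
  | recycle l anc Ds =>
    refine GGoal.forall_disjTT_iff.mpr fun C hC => ?_
    obtain ⟨D, hD, rfl⟩ := List.mem_map.mp hC
    simpa using (List.mem_filter.mp hD).2
  | sr1 => exact hg.2
  | sr1' => exact hg.1
  | sr3 _ _ hcons => exact hcons
  | sr5 => exact ⟨⟨hg.1, hg.2.1⟩, hg.1, hg.2.2⟩
  | sr5' => exact ⟨⟨hg.1.1, hg.2⟩, hg.1.2, hg.2⟩
  | andL _ _ _ _ ih | orL _ _ _ _ ih => exact ⟨ih hg.1, hg.2⟩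
  | andR _ _ _ _ ih | orR _ _ _ _ ih => exact ⟨hg.1, ih hg.2⟩

theorem WellFormed.of_steps {Δ : Lit α → Option (CRule α)} {g g' : GGoal α}
    (hs : GStepsC P Δ g g') (hg : WellFormed g) : WellFormed g' := by
  induction hs with
  | refl => exact hg
  | tail _ hstep ih => exact ih.of_step hstep

end Rewriting

section Justification
variable {α : Type} [DecidableEq α] {P : List (PRule α)}

theorem Answer.sat {C : Set (Lit α)} {g : GGoal α} {D : Set (Lit α)} (h : Answer P g D)
    (hDC : D ⊆ C) (hg : g.Forall (fun _ anc => LoopSafe P (negAtoms C) anc) (fun _ => True)) :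
    g.Sat (Entailed P (negAtoms C)) := by
  induction h with
  | T => trivial
  | orL _ ih => exact .inl (ih hDC hg.1)
  | orR _ ih => exact .inr (ih hDC hg.2)
  | and _ _ ih₁ ih₂ =>
    exact ⟨ih₁ (Set.subset_union_left.trans hDC) hg.1,
      ih₂ (Set.subset_union_right.trans hDC) hg.2⟩
  | litPos a anc _ ih =>
    have hsafe := LoopSafe.concat_pos hg a
    exact derives_of_sat_posExp (ih hDC (GGoal.forall_posExp (fun _ => hsafe) trivial))
  | litNeg a anc h => exact hDC (Answer.litNeg a anc h).mem_of_lit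
  | loop l anc hloop =>
    cases l with
    | pos b => exact LoopSafe.derives_of_succLoopChain hg hloop
    | neg b => exact hDC (List.mem_append_right _ List.mem_cons_self)
  | recycle l anc hl hjust =>
    exact ((hjust l hl).mono (Set.subset_union_right.trans hDC)).entailed (hDC (.inr hl))

theorem Answer.justified {C : Set (Lit α)} {g : GGoal α} {D : Set (Lit α)} (h : Answer P g D)
    (hDC : D ⊆ C)
    (hg : g.Forall (fun _ anc => ∀ x ∈ anc, Justified P C x)
      (fun E => ∀ x ∈ E, Justified P C x)) :
    ∀ x ∈ D, Justified P C x := by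
  induction h with
  | T => exact hg
  | orL _ ih => exact ih hDC hg.1
  | orR _ ih => exact ih hDC hg.2
  | and _ _ ih₁ ih₂ =>
    rintro x (hx | hx)
    · exact ih₁ (Set.subset_union_left.trans hDC) hg.1 x hx
    · exact ih₂ (Set.subset_union_right.trans hDC) hg.2 x hx
  | litPos a anc h ih =>
    have hsafe : LoopSafe P (negAtoms C) anc := fun p _ hsub =>
      hg (.pos p) (hsub.subset List.mem_cons_self)
    have ha : Justified P C (.pos a) := (Answer.litPos a anc h).sat hDC hsafe
    have hch : ∀ x ∈ anc ++ [.pos a], Justified P C x := fun x hx =>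
      (List.mem_append.mp hx).elim (hg x) fun hx => List.mem_singleton.mp hx ▸ ha
    exact ih hDC (GGoal.forall_posExp (fun _ => hch) hch)
  | litNeg a anc h ih =>
    have ha : Justified P C (.neg a) := h.justified_neg_of_negExp.mono hDC
    have hch : ∀ x ∈ anc ++ [.neg a], Justified P C x := fun x hx =>
      (List.mem_append.mp hx).elim (hg x) fun hx => List.mem_singleton.mp hx ▸ ha
    exact ih hDC (GGoal.forall_negExp (fun _ => hch) hch)
  | loop l anc hloop =>
    intro x hx
    rcases List.mem_append.mp hx with hx | hx
    · exact hg x hx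
    · obtain rfl := List.mem_singleton.mp hx
      exact hg x (mem_of_succLoopChain hloop)
  | recycle l anc hl hjust =>
    rintro x (hx | hx)
    · rcases List.mem_append.mp hx with hx | hx
      · exact hg x hx
      · obtain rfl := List.mem_singleton.mp hx
        exact (hjust x hl).mono (Set.subset_union_right.trans hDC)
    · exact (hjust x hx).mono (Set.subset_union_right.trans hDC)

theorem consistent_justified_of_gStepsC {Δ : Lit α → Option (CRule α)} (hΔ : SoundRules P Δ)
    {l : Lit α} {Cs : List (Set (Lit α))} (h : GStepsC P Δ (initGoal l) (disjTT Cs))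
    {C : Set (Lit α)} (hC : C ∈ Cs) : ConsistentSet C ∧ l ∈ C ∧ JustifiedSet P C := by
  have hans : Answer P (initGoal l) C := Answer.of_steps hΔ h (Answer.disjTT_iff.mpr hC)
  have hwf : WellFormed (disjTT Cs) := WellFormed.of_steps h noFailingLoop_nil
  exact ⟨GGoal.forall_disjTT_iff.mp hwf C hC, hans.mem_of_lit,
    hans.justified subset_rfl (by simp [initGoal, GGoal.Forall])⟩

theorem ValidSystem.soundRules {Δ : Lit α → Option (CRule α)} (h : ValidSystem P Δ) :
    SoundRules P Δ := by
  induction h with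
  | base => intro _ _ h; cases h
  | step Δ Δ' _ hΔ' ih =>
    intro l Ds hl D hD
    rcases hΔ' l with heq | ⟨cr, hcr, hcomp⟩
    · exact ih l Ds (heq ▸ hl) D hD
    · obtain rfl : CRule.succ Ds = cr := Option.some.inj (hl ▸ hcr)
      obtain ⟨-, hsteps⟩ := hcomp
      obtain ⟨-, hmem, hjust⟩ := consistent_justified_of_gStepsC ih hsteps hD
      exact ⟨hmem, hjust⟩

end Justification

theorem recycling_sound_general {α : Type} [DecidableEq α] (P : List (PRule α))
    (Δ : Lit α → Option (CRule α)) (hΔ : ValidSystem P Δ)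
    (g : Lit α) (Cs : List (Set (Lit α)))
    (h : GStepsC P Δ (initGoal g) (disjTT Cs)) :
    ∀ C ∈ Cs, ∃ M : Set (Lit α), IsPSM P M ∧ g ∈ C ∧ C ⊆ M := by
  intro C hC
  obtain ⟨hcons, hg, hjust⟩ := consistent_justified_of_gStepsC hΔ.soundRules h hC
  obtain ⟨M, hM, hCM⟩ := exists_isPSM_superset hcons hjust
  exact ⟨M, hM, hg, hCM⟩

/-- Soundness of recycling: for every `i ≥ 0`, the rewrite system `R^i_P`
is sound: for any literal `g` and any rewrite sequence
`g →_{R^i} T(C₁) ∨ … ∨ T(Cₙ)`, and for each `C_j` (`j ∈ [1..n]`), there exists a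
partial stable model `M` of `P` such that `g ∈ C_j ⊆ M`. -/
theorem recycling_sound {α : Type} [DecidableEq α] (P : List (PRule α))
    (Δ : Lit α → Option (CRule α)) (hΔ : ValidSystem P Δ)
    (g : Lit α) (Cs : List (Set (Lit α))) (hne : Cs ≠ [])
    (h : GStepsC P Δ (initGoal g) (disjTT Cs)) :
    ∀ C ∈ Cs, ∃ M : Set (Lit α), IsPSM P M ∧ g ∈ C ∧ C ⊆ M :=
  recycling_sound_general P Δ hΔ g Cs h
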